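/- Let R be a commutative noetherian ring, A a finite R-algebra, and I an indecomposable injective left A-module with associated prime p ∈ Spec(R). Then the support of I as an R-module is the closure of {p}, i.e. Supp(I) = {q ∈ Spec(R) : p ⊆ q}. -/

import Mathlib

/-!
An indecomposable injective module is uniform. Given `N ⊓ L = ⊥`, enlarge `N` to `M` maximal
with `M ⊓ L = ⊥`, and take `K` maximal with `K ⊓ M = ⊥`. Injectivity extends the projection
`M ⊕ K → M` to `ψ : I → I`; as `M` is essential in `range ψ`, the maximality of `M` forces
`range ψ = M`, so `M` is a direct summand and `N = ⊥` or `L = ⊥`.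

If `s ∈ p` kills `x ≠ 0`, then for any `m` the noetherian `R`-module `A ∙ m` has, by Fitting,
a submodule `A ∙ sⁿ m` on which `s` acts injectively. It meets `A ∙ x` trivially, so uniformity
gives `sⁿ m = 0`. Hence every element of `I` is annihilated by a power of each `s ∈ p`, i.e.
`Supp I ⊆ V(p)`, while `p ∈ Supp I` gives the other inclusion.
-/

/-- A module is indecomposable if it is nonzero and is not the direct sum of two nonzero
submodules. -/
def Module.Indecomposable (A : Type*) [Ring A] (M : Type*) [AddCommGroup M]
    [Module A M] : Prop :=
  Nontrivial M ∧ ∀ N N' : Submodule A M, IsCompl N N' → N = ⊥ ∨ N' = ⊥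

theorem exists_le_maximal_disjoint {α : Type*} [CompleteLattice α] [IsCompactlyGenerated α]
    {a b : α} (h : Disjoint a b) : ∃ c, a ≤ c ∧ Maximal (Disjoint · b) c :=
  zorn_le_nonempty₀ _ (fun c hc hchain _ _ =>
    ⟨sSup c, hchain.directedOn.disjoint_sSup_left.2 hc, fun _ => le_sSup⟩) a h

namespace Submodule

variable {A I : Type*} [Ring A] [AddCommGroup I] [Module A I]

theorem exists_smul_mem_ne_zero_of_maximal_disjoint {K M : Submodule A I}
    (hK : Maximal (Disjoint · M) K) {v : I} (hv : v ∉ K) :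
    ∃ a : A, ∃ k ∈ K, a • v + k ∈ M ∧ a • v + k ≠ 0 := by
  have hdis : ¬ Disjoint (K ⊔ span A {v}) M := fun hdis =>
    hv (hK.2 hdis le_sup_left (mem_sup_right (mem_span_singleton_self v)))
  obtain ⟨y, hyKv, hyM, hy0⟩ : ∃ y ∈ K ⊔ span A {v}, y ∈ M ∧ y ≠ 0 := by
    simpa [disjoint_def] using hdis
  obtain ⟨k, hk, _, hv', rfl⟩ := mem_sup.mp hyKv
  obtain ⟨a, rfl⟩ := mem_span_singleton.mp hv'
  exact ⟨a, k, hk, by rwa [add_comm], by rwa [add_comm]⟩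

theorem exists_isProj_of_maximal_disjoint [Module.Injective A I] {L M K : Submodule A I}
    (hM : Maximal (Disjoint · L) M) (hK : Maximal (Disjoint · M) K) :
    ∃ ψ : I →ₗ[A] I, LinearMap.IsProj M ψ ∧ K ≤ LinearMap.ker ψ := by
  have hinj : Function.Injective (M.subtype.coprod K.subtype) := by
    rw [← LinearMap.ker_eq_bot, LinearMap.ker_coprod_of_disjoint_range, ker_subtype,
      ker_subtype, prod_bot]
    rw [range_subtype, range_subtype]
    exact hK.prop.symm
  obtain ⟨ψ, hψ⟩ := Module.Injective.out _ hinj (M.subtype ∘ₗ LinearMap.fst A M K)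
  have hψM (m : I) (hm : m ∈ M) : ψ m = m := by simpa using hψ (⟨m, hm⟩, 0)
  have hψK (k : I) (hk : k ∈ K) : ψ k = 0 := by simpa using hψ (0, ⟨k, hk⟩)
  -- `M` is essential in `range ψ`, so `range ψ` inherits `Disjoint M L`.
  have hrange : Disjoint (LinearMap.range ψ) L := by
    rw [disjoint_def]
    rintro _ ⟨v, rfl⟩ hvL
    by_contra hψv
    have hvK : v ∉ K := fun hv => hψv (hψK v hv)
    obtain ⟨a, k, hk, hM', hne⟩ := exists_smul_mem_ne_zero_of_maximal_disjoint hK hvK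
    have : a • ψ v = a • v + k := by
      rw [← map_smul, ← hψM _ hM', map_add, hψK k hk, add_zero]
    exact hne (disjoint_def.mp hM.prop _ hM' (this ▸ L.smul_mem a hvL))
  have hMrange : M ≤ LinearMap.range ψ := fun m hm => ⟨m, hψM m hm⟩
  exact ⟨ψ, ⟨fun v => hM.2 hrange hMrange (LinearMap.mem_range_self ψ v), hψM⟩,
    fun k hk => hψK k hk⟩

end Submodule

theorem Module.Indecomposable.eq_bot_or_eq_bot_of_disjoint {A I : Type*} [Ring A]
    [AddCommGroup I] [Module A I] [Module.Injective A I] (hind : Module.Indecomposable A I)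
    {N L : Submodule A I} (h : Disjoint N L) : N = ⊥ ∨ L = ⊥ := by
  obtain ⟨M, hNM, hM⟩ := exists_le_maximal_disjoint h
  obtain ⟨K, hLK, hK⟩ := exists_le_maximal_disjoint hM.prop.symm
  obtain ⟨ψ, hψ, hKψ⟩ := Submodule.exists_isProj_of_maximal_disjoint hM hK
  refine (hind.2 _ _ hψ.isCompl).imp (fun hM0 => ?_) (fun hψ0 => ?_)
  · exact le_bot_iff.mp (hM0 ▸ hNM)
  · exact le_bot_iff.mp (hψ0 ▸ hLK.trans hKψ)

section Torsion

variable {R A I : Type*} [CommRing R] [IsNoetherianRing R] [Ring A] [Algebra R A]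
  [Module.Finite R A] [AddCommGroup I] [Module A I] [Module R I] [IsScalarTower R A I]

theorem exists_eq_zero_of_smul_eq_zero_of_mem_span_pow_smul (s : R) (m : I) :
    ∃ n, ∀ y ∈ Submodule.span A {s ^ n • m}, s • y = 0 → y = 0 := by
  let V := Submodule.span A {m}
  have : Module.Finite R V := Module.Finite.trans A V
  have : IsNoetherian R V := isNoetherian_of_isNoetherianRing_of_finite R V
  let f := algebraMap R (Module.End R V) s
  obtain ⟨n, hdis, hn⟩ :=
    (f.eventually_disjoint_ker_pow_range_pow.and (Filter.eventually_ge_atTop 1)).exists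
  have hsn (y : I) (hy : s • y = 0) : s ^ n • y = 0 := by
    rw [← Nat.sub_add_cancel hn, pow_succ, mul_smul, hy, smul_zero]
  refine ⟨n, fun y hy hsy => ?_⟩
  obtain ⟨a, rfl⟩ := Submodule.mem_span_singleton.mp hy
  have hfn (v : V) : ((f ^ n) v : I) = s ^ n • (v : I) := by
    rw [← map_pow, Module.algebraMap_end_apply, Submodule.coe_smul_of_tower]
  let u : V := ⟨a • m, Submodule.smul_mem _ a (Submodule.mem_span_singleton_self m)⟩
  have hu : ((f ^ n) u : I) = a • s ^ n • m := by rw [hfn, smul_comm]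
  have hker : (f ^ n) u ∈ LinearMap.ker (f ^ n) := by
    rw [LinearMap.mem_ker, ← Submodule.coe_eq_zero, hfn, hu, hsn _ hsy]
  rw [← hu, Submodule.coe_eq_zero.mpr (Submodule.disjoint_def.mp hdis _ hker ⟨u, rfl⟩)]

variable [Module.Injective A I]

theorem Module.Indecomposable.exists_pow_smul_eq_zero (hind : Module.Indecomposable A I)
    {s : R} {x : I} (hx : x ≠ 0) (hsx : s • x = 0) (m : I) : ∃ n, s ^ n • m = 0 := by
  obtain ⟨n, hn⟩ := exists_eq_zero_of_smul_eq_zero_of_mem_span_pow_smul (A := A) s m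
  have hdis : Disjoint (Submodule.span A {x}) (Submodule.span A {s ^ n • m}) := by
    rw [Submodule.disjoint_def]
    rintro _ hy hy'
    obtain ⟨b, rfl⟩ := Submodule.mem_span_singleton.mp hy
    exact hn _ hy' (by rw [smul_comm, hsx, smul_zero])
  refine ⟨n, ?_⟩
  simpa [hx] using hind.eq_bot_or_eq_bot_of_disjoint hdis

end Torsion

/-- Let `R` be a commutative noetherian ring, `A` a finite `R`-algebra and `I` an
indecomposable injective left `A`-module with associated prime `p ∈ Spec R`.  Then the
support of `I` as an `R`-module is the closure of `{p}`, i.e.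
`Supp I = {q ∈ Spec R : p ⊆ q}`. -/
theorem support_of_indecomposable_injective_eq_closure
    {R A : Type*} [CommRing R] [IsNoetherianRing R] [Ring A] [Algebra R A]
    [Module.Finite R A] (I : Type*) [AddCommGroup I] [Module A I] [Module R I]
    [IsScalarTower R A I] [Module.Injective A I]
    (hind : Module.Indecomposable A I)
    (p : Ideal R) (hp : IsAssociatedPrime p I) :
    Module.support R I = {q : PrimeSpectrum R | p ≤ q.asIdeal} := by
  obtain ⟨hpp, x, rfl⟩ := isAssociatedPrime_iff.mp hp
  have hmem (r : R) : r ∈ Submodule.colon ⊥ {x} ↔ r • x = 0 := by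
    simp [Submodule.mem_colon_singleton]
  have hx : x ≠ 0 := by
    rintro rfl
    exact hpp.ne_top (Ideal.eq_top_iff_one _ |>.mpr ((hmem 1).mpr (smul_zero 1)))
  ext q
  simp only [Module.mem_support_iff_exists_annihilator, Set.mem_ofPred_eq,
    SetLike.le_def, Submodule.mem_annihilator_span_singleton, hmem]
  refine ⟨fun ⟨m, hm⟩ s hsx => ?_, fun h => ⟨x, h⟩⟩
  obtain ⟨n, hn⟩ := hind.exists_pow_smul_eq_zero hx hsx m
  exact q.2.mem_of_pow_mem n (hm hn)
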